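/- Let S be symmetric positive definite with R = S², let γ > 0, and let y = √(γ/2)·Me, μ₁ = Sd, μ₂ = √(2/γ)·Δ_d. Then for any vectors e, d, Δ_d and matrices M ⪰ 0, B, the algebraic identity/estimate holds: -e^T(γM² + MBR^{-1}BᵀM)e + 2eᵀM(Δ_d + Bd) ≤ -‖y‖² + ‖μ₁‖² + ‖μ₂‖². -/

import Mathlib

open Matrix

/- Write `C = M B S⁻¹`, `w = Cᵀ e` and `u = M e`. Since `M` and `S` are symmetric,
`M B R⁻¹ Bᵀ M = C Cᵀ` and `M B = C S`, so the left-hand side equals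
`-γ ‖u‖² - ‖w‖² + 2 u ⬝ Δ_d + 2 w ⬝ S d`. Two instances of Young's inequality
`2 a ⬝ b ≤ c ‖a‖² + c⁻¹ ‖b‖²`, with `c = 1` and with `c = γ / 2`, finish the proof. -/

section

variable {ι κ R : Type*} [Fintype ι] [Fintype κ]

theorem dotProduct_mulVec_eq_transpose_mulVec_dotProduct [CommSemiring R]
    (C : Matrix ι κ R) (x : ι → R) (y : κ → R) : x ⬝ᵥ (C *ᵥ y) = (Cᵀ *ᵥ x) ⬝ᵥ y := by
  rw [dotProduct_mulVec, mulVec_transpose]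

theorem dotProduct_mul_transpose_self_mulVec [CommSemiring R] (C : Matrix ι κ R) (x : ι → R) :
    x ⬝ᵥ ((C * Cᵀ) *ᵥ x) = (Cᵀ *ᵥ x) ⬝ᵥ (Cᵀ *ᵥ x) := by
  rw [← mulVec_mulVec, dotProduct_mulVec_eq_transpose_mulVec_dotProduct]

theorem smul_dotProduct_smul_self_of_nonneg {c : ℝ} (hc : 0 ≤ c) (x : ι → ℝ) :
    (√c • x) ⬝ᵥ (√c • x) = c * (x ⬝ᵥ x) := by
  rw [smul_dotProduct, dotProduct_smul, smul_eq_mul, smul_eq_mul, ← mul_assoc,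
    Real.mul_self_sqrt hc]

theorem two_mul_dotProduct_le {c : ℝ} (hc : 0 < c) (a b : ι → ℝ) :
    2 * (a ⬝ᵥ b) ≤ c * (a ⬝ᵥ a) + c⁻¹ * (b ⬝ᵥ b) := by
  simp only [dotProduct, Finset.mul_sum, ← Finset.sum_add_distrib]
  gcongr with i
  simpa only [mul_assoc, ← sq] using two_mul_le_add_mul_sq (a := a i) (b := b i) hc

end

/-- Completion-of-squares estimate in the proof of Lemma 4 (finite ℒ₂ gain):
with y = √(γ/2)·Me, μ₁ = Sd, μ₂ = √(2/γ)·Δ_d and R = S²,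
-eᵀ(γM² + MBR⁻¹BᵀM)e + 2eᵀM(Δ_d + Bd) ≤ -‖y‖² + ‖μ₁‖² + ‖μ₂‖². -/
theorem stmt13 {n m : ℕ} (M : Matrix (Fin n) (Fin n) ℝ) (B : Matrix (Fin n) (Fin m) ℝ)
    (S R : Matrix (Fin m) (Fin m) ℝ) (hM : M.PosSemidef) (hS : S.PosDef) (hR : R = S * S)
    (γ : ℝ) (hγ : 0 < γ) (e Δd : Fin n → ℝ) (d : Fin m → ℝ)
    (y : Fin n → ℝ) (hy : y = Real.sqrt (γ / 2) • (M *ᵥ e))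
    (μ1 : Fin m → ℝ) (hμ1 : μ1 = S *ᵥ d)
    (μ2 : Fin n → ℝ) (hμ2 : μ2 = Real.sqrt (2 / γ) • Δd) :
    -(e ⬝ᵥ ((γ • (M * M) + M * B * R⁻¹ * Bᵀ * M) *ᵥ e)) + 2 * (e ⬝ᵥ M *ᵥ (Δd + B *ᵥ d)) ≤
      -(y ⬝ᵥ y) + μ1 ⬝ᵥ μ1 + μ2 ⬝ᵥ μ2 := by
  subst hy hμ1 hμ2 hR
  have hMt : Mᵀ = M := (isHermitian_iff_isSymm.1 hM.isHermitian).eq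
  have hSt : Sᵀ = S := (isHermitian_iff_isSymm.1 hS.isHermitian).eq
  have hSS : S⁻¹ * S = 1 := nonsing_inv_mul S (isUnit_iff_ne_zero.2 hS.det_pos.ne')
  set C := M * B * S⁻¹
  have hCCt : M * B * (S * S)⁻¹ * Bᵀ * M = C * Cᵀ := by
    simp only [C, transpose_mul, transpose_nonsing_inv, hMt, hSt, Matrix.mul_inv_rev,
      Matrix.mul_assoc]
  have hMB : M * B = C * S := by rw [Matrix.mul_assoc, hSS, Matrix.mul_one]
  have hcross : e ⬝ᵥ M *ᵥ (Δd + B *ᵥ d) = (M *ᵥ e) ⬝ᵥ Δd + (Cᵀ *ᵥ e) ⬝ᵥ (S *ᵥ d) := by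
    rw [mulVec_add, dotProduct_add, mulVec_mulVec, hMB, ← mulVec_mulVec,
      dotProduct_mulVec_eq_transpose_mulVec_dotProduct,
      dotProduct_mulVec_eq_transpose_mulVec_dotProduct C, hMt]
  have hMM : M * M = M * Mᵀ := by rw [hMt]
  rw [hCCt, hMM, add_mulVec, dotProduct_add, smul_mulVec, dotProduct_smul,
    dotProduct_mul_transpose_self_mulVec, dotProduct_mul_transpose_self_mulVec, hcross, hMt,
    smul_dotProduct_smul_self_of_nonneg (by positivity),
    smul_dotProduct_smul_self_of_nonneg (by positivity), smul_eq_mul]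
  have young₁ := two_mul_dotProduct_le one_pos (Cᵀ *ᵥ e) (S *ᵥ d)
  have young₂ := two_mul_dotProduct_le (half_pos hγ) (M *ᵥ e) Δd
  rw [inv_one, one_mul, one_mul] at young₁
  rw [inv_div] at young₂
  linarith
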